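/- Let Ω be a compact Hausdorff space without isolated points (e.g. Ω = [0,1]). Then no extreme point of the closed unit ball of C(Ω)* (real scalars) is a point of weak*-to-weak continuity for the identity map on the unit sphere of C(Ω)*: for each s ∈ Ω there is a sequence sₙ → s with sₙ ≠ s, and the Dirac measures δ_{sₙ} converge weak* to δ_s but do not converge weakly to δ_s in C(Ω)*. -/

import Mathlib

open Filter Topology Set

/-!
Weak* convergence `δ_{sₙ} → δ_s` is continuity of each `f ∈ C(Ω)` along `sₙ → s`.
Weak convergence fails by Mazur's theorem: a weak limit of the `δ_{sₙ}` lies in the norm closure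
of the functionals supported on closed sets avoiding `s`, and each such `μ` has
`‖δ_s - μ‖ ≥ 1`, as one sees by testing against an Urysohn function equal to `1` at `s` and
vanishing on the support of `μ`.
-/

theorem Convex.mem_of_forall_tendsto_dual {E ι : Type*} [AddCommGroup E] [Module ℝ E]
    [TopologicalSpace E] [IsTopologicalAddGroup E] [ContinuousSMul ℝ E] [LocallyConvexSpace ℝ E]
    {C : Set E} (hC_convex : Convex ℝ C) (hC_closed : IsClosed C) {l : Filter ι} [l.NeBot] {x : ι → E}
    {y : E} (hx : ∀ᶠ i in l, x i ∈ C)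
    (hxy : ∀ Λ : StrongDual ℝ E, Tendsto (fun i => Λ (x i)) l (𝓝 (Λ y))) : y ∈ C := by
  by_contra hy
  obtain ⟨Λ, c, hΛC, hcy⟩ := geometric_hahn_banach_closed_point hC_convex hC_closed hy
  have : Λ y ≤ c := le_of_tendsto (hxy Λ) (hx.mono fun i hi => (hΛC _ hi).le)
  linarith

namespace ContinuousMap

variable {Ω : Type*} [TopologicalSpace Ω]

def dualSupportedAwayFrom (s : Ω) : Submodule ℝ (StrongDual ℝ C(Ω, ℝ)) where
  carrier := {μ | ∃ K : Set Ω, IsClosed K ∧ s ∉ K ∧ ∀ g : C(Ω, ℝ), EqOn g 0 K → μ g = 0}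
  zero_mem' := ⟨∅, isClosed_empty, notMem_empty s, fun _ _ => rfl⟩
  add_mem' := by
    rintro μ ν ⟨K, hK, hsK, hμ⟩ ⟨L, hL, hsL, hν⟩
    refine ⟨K ∪ L, hK.union hL, fun h => h.elim hsK hsL, fun g hg => ?_⟩
    simp [hμ g (hg.mono subset_union_left), hν g (hg.mono subset_union_right)]
  smul_mem' := by
    rintro c μ ⟨K, hK, hsK, hμ⟩
    exact ⟨K, hK, hsK, fun g hg => by simp [hμ g hg]⟩

theorem evalCLM_mem_dualSupportedAwayFrom [T1Space Ω] {x s : Ω} (hx : x ≠ s) :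
    (evalCLM ℝ x : StrongDual ℝ C(Ω, ℝ)) ∈ dualSupportedAwayFrom s :=
  ⟨{x}, isClosed_singleton, hx.symm, fun _ hg => hg (mem_singleton x)⟩

theorem one_le_norm_evalCLM_sub [CompactSpace Ω] [T2Space Ω] {s : Ω}
    {μ : StrongDual ℝ C(Ω, ℝ)} (hμ : μ ∈ dualSupportedAwayFrom s) :
    1 ≤ ‖(evalCLM ℝ s : StrongDual ℝ C(Ω, ℝ)) - μ‖ := by
  obtain ⟨K, hK, hsK, hμK⟩ := hμ
  obtain ⟨g, hgK, hgs, hg01⟩ := exists_continuous_zero_one_of_isClosed hK isClosed_singleton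
    (disjoint_singleton_right.2 hsK)
  have hg : ‖g‖ ≤ 1 := (norm_le g zero_le_one).2 fun x => by
    rw [Real.norm_eq_abs, abs_le]
    exact ⟨by linarith [(hg01 x).1], (hg01 x).2⟩
  have hval : ((evalCLM ℝ s : StrongDual ℝ C(Ω, ℝ)) - μ) g = 1 := by
    simp [hμK g hgK, hgs (mem_singleton s)]
  simpa [hval] using ((evalCLM ℝ s : StrongDual ℝ C(Ω, ℝ)) - μ).unit_le_opNorm g hg

theorem evalCLM_notMem_topologicalClosure_dualSupportedAwayFrom [CompactSpace Ω] [T2Space Ω]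
    (s : Ω) :
    (evalCLM ℝ s : StrongDual ℝ C(Ω, ℝ)) ∉ (dualSupportedAwayFrom s).topologicalClosure := by
  have hclosed :
      IsClosed {μ : StrongDual ℝ C(Ω, ℝ) | 1 ≤ ‖(evalCLM ℝ s : StrongDual ℝ C(Ω, ℝ)) - μ‖} :=
    isClosed_le continuous_const
      ((continuous_const.sub continuous_id).norm (E := StrongDual ℝ C(Ω, ℝ)))
  intro hs
  have : 1 ≤ ‖(evalCLM ℝ s : StrongDual ℝ C(Ω, ℝ)) - evalCLM ℝ s‖ :=
    closure_minimal (fun _ => one_le_norm_evalCLM_sub) hclosed hs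
  norm_num [ContinuousLinearMap.opNorm_zero] at this

end ContinuousMap

theorem stmt_5 (Ω : Type*) [TopologicalSpace Ω] [CompactSpace Ω]
    [TopologicalSpace.MetrizableSpace Ω]
    (hiso : ∀ x : Ω, (𝓝[≠] x).NeBot) (s : Ω) :
    ∃ u : ℕ → Ω,
      (∀ n, u n ≠ s) ∧
      Tendsto u atTop (𝓝 s) ∧
      -- weak* convergence of `δ_{u n}` to `δ_s`
      (∀ f : C(Ω, ℝ),
        Tendsto (fun n => (ContinuousMap.evalCLM ℝ (u n) : StrongDual ℝ C(Ω, ℝ)) f) atTop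
          (𝓝 ((ContinuousMap.evalCLM ℝ s : StrongDual ℝ C(Ω, ℝ)) f))) ∧
      -- failure of weak convergence: some functional in the bidual does not converge
      ¬ (∀ Λ : StrongDual ℝ (StrongDual ℝ C(Ω, ℝ)),
        Tendsto (fun n => Λ (ContinuousMap.evalCLM ℝ (u n))) atTop
          (𝓝 (Λ (ContinuousMap.evalCLM ℝ s)))) := by
  obtain ⟨u, hu_ne, hu⟩ : ∃ u : ℕ → Ω, (∀ n, u n ∈ ({s}ᶜ : Set Ω)) ∧ Tendsto u atTop (𝓝 s) :=
    mem_closure_iff_seq_limit.1 (mem_closure_iff_nhdsWithin_neBot.2 (hiso s))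
  refine ⟨u, hu_ne, hu, fun f => (f.continuous.tendsto s).comp hu, fun hweak => ?_⟩
  set M := ContinuousMap.dualSupportedAwayFrom s
  exact ContinuousMap.evalCLM_notMem_topologicalClosure_dualSupportedAwayFrom s <|
    M.topologicalClosure.convex.mem_of_forall_tendsto_dual M.isClosed_topologicalClosure
      (Eventually.of_forall fun n => M.le_topologicalClosure
        (ContinuousMap.evalCLM_mem_dualSupportedAwayFrom (hu_ne n))) hweak
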